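/- arXiv:2201.06694 — 2 statements merged into one kernel-verified Lean document; each statement's English description precedes it below -/
import Mathlib

section
/- Let Π = Π(ρ, F) be the transition matrix of the network formation game on S = (E → Bool), and let π : S → ℝ be its stationary distribution (π g ≥ 0, ∑_g π g = 1, and ∑_g π g * Π g w = π w for all w). Then for every initial probability vector π₀ : S → ℝ (with π₀ g ≥ 0 and ∑_g π₀ g = 1) and every w ∈ S, the sequence t ↦ ∑_{g ∈ S} π₀ g * (Π^t) g w converges to π w as t → ∞; that is, the stationary distribution is the long-run distribution of the chain from any starting distribution. -/
open Matrix Finset Filter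

/-- Flip the link `e` in network `g`. -/
def flipL {E : Type*} [DecidableEq E] (e : E) (g : E → Bool) : E → Bool :=
  Function.update g e (!(g e))

/-- The one-step transition matrix of the network formation game. -/
noncomputable def netPi {E : Type*} [DecidableEq E] [Fintype E]
    (ρ : E → (E → Bool) → ℝ) (F : (E → Bool) → E → ℝ) :
    Matrix (E → Bool) (E → Bool) ℝ :=
  Matrix.of fun g w =>
    if g = w then ∑ e, ρ e g * (1 - F g e)
    else ∑ e, if w = flipL e g then ρ e g * F g e else 0

/-- A meeting function: strictly positive selection probabilities summing to one. -/
def IsMeeting {E : Type*} [Fintype E] (ρ : E → (E → Bool) → ℝ) : Prop :=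
  (∀ e g, 0 < ρ e g) ∧ ∀ g, ∑ e, ρ e g = 1

/-- An acceptance function: probabilities strictly between 0 and 1, complementary under flips. -/
def IsAcceptance {E : Type*} [DecidableEq E] (F : (E → Bool) → E → ℝ) : Prop :=
  (∀ g e, 0 < F g e ∧ F g e < 1) ∧ ∀ g e, F g e + F (flipL e g) e = 1

/-!
Π is row-stochastic with a positive diagonal, and any network can be turned into any other by
flipping the links where they differ one at a time, so every entry of Π ^ |E| is positive.
Doeblin's argument then shows that Π ^ |E| contracts the ℓ¹ norm of every vector of total mass
zero by a factor r < 1, so the ℓ¹ distance from π₀ Π ^ t to the fixed point π decays like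
r ^ (t / |E|).
-/

open Topology

theorem tendsto_zero_of_antitone_of_le_mul {L : ℕ → ℝ} (hL : ∀ t, 0 ≤ L t) (hanti : Antitone L)
    {N : ℕ} (hN : 0 < N) {r : ℝ} (hr0 : 0 ≤ r) (hr1 : r < 1)
    (hstep : ∀ t, L (t + N) ≤ r * L t) : Tendsto L atTop (𝓝 0) := by
  have hgeom : ∀ k, L (k * N) ≤ r ^ k * L 0 := by
    intro k
    induction k with
    | zero => simp
    | succ k ih =>
      calc L ((k + 1) * N) = L (k * N + N) := by rw [Nat.succ_mul]
        _ ≤ r * L (k * N) := hstep _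
        _ ≤ r * (r ^ k * L 0) := mul_le_mul_of_nonneg_left ih hr0
        _ = r ^ (k + 1) * L 0 := by ring
  refine squeeze_zero hL (fun t => (hanti (Nat.div_mul_le_self t N)).trans (hgeom (t / N))) ?_
  simpa using ((tendsto_pow_atTop_nhds_zero_of_lt_one hr0 hr1).comp
    (Nat.tendsto_div_const_atTop hN.ne')).mul_const (L 0)

section Doeblin

variable {n : Type*} [Fintype n]

theorem sum_abs_vecMul_le_of_le {Q : Matrix n n ℝ} {ε : ℝ} (hε : ∀ i j, ε ≤ Q i j)
    (hQ : ∀ i, ∑ j, Q i j = 1) {d : n → ℝ} (hd : ∑ i, d i = 0) :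
    ∑ j, |(d ᵥ* Q) j| ≤ (1 - Fintype.card n * ε) * ∑ i, |d i| := by
  have hcol : ∀ j, |(d ᵥ* Q) j| ≤ ∑ i, |d i| * (Q i j - ε) := by
    intro j
    -- `d` has total mass zero, so lowering every entry of `Q` by `ε` does not change `d ᵥ* Q`.
    have hshift : (d ᵥ* Q) j = ∑ i, d i * (Q i j - ε) := by
      simp [vecMul, dotProduct, mul_sub, sum_sub_distrib, ← sum_mul, hd]
    rw [hshift]
    refine (abs_sum_le_sum_abs _ _).trans (sum_le_sum fun i _ => ?_)
    rw [abs_mul, abs_of_nonneg (sub_nonneg.2 (hε i j))]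
  calc ∑ j, |(d ᵥ* Q) j| ≤ ∑ j, ∑ i, |d i| * (Q i j - ε) := sum_le_sum fun j _ => hcol j
    _ = ∑ i, |d i| * (1 - Fintype.card n * ε) := by
      rw [sum_comm]
      refine sum_congr rfl fun i _ => ?_
      rw [← mul_sum, sum_sub_distrib, hQ, sum_const, card_univ, nsmul_eq_mul]
    _ = (1 - Fintype.card n * ε) * ∑ i, |d i| := by rw [← sum_mul, mul_comm]

theorem exists_pos_le_of_forall_pos [Nonempty n] {Q : Matrix n n ℝ} (hQ : ∀ i j, 0 < Q i j) :
    ∃ δ > 0, ∀ i j, δ ≤ Q i j := by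
  obtain ⟨p, -, hp⟩ := exists_min_image univ (fun p : n × n => Q p.1 p.2) univ_nonempty
  exact ⟨Q p.1 p.2, hQ _ _, fun i j => hp (i, j) (mem_univ _)⟩

variable [DecidableEq n] {P : Matrix n n ℝ}

theorem vecMul_pow_eq_self {π : n → ℝ} (hπ : π ᵥ* P = π) (t : ℕ) : π ᵥ* (P ^ t) = π := by
  induction t with
  | zero => simp
  | succ t ih => rw [pow_succ, ← vecMul_vecMul, ih, hπ]

theorem sum_vecMul_of_mem_rowStochastic (hP : P ∈ rowStochastic ℝ n) (d : n → ℝ) :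
    ∑ j, (d ᵥ* P) j = ∑ i, d i := by
  rw [← dotProduct_one, ← dotProduct_mulVec, one_vecMul_of_mem_rowStochastic hP, dotProduct_one]

theorem tendsto_sum_abs_vecMul_pow [Nonempty n] (hP : P ∈ rowStochastic ℝ n) {N : ℕ}
    (hN : 0 < N) (hpos : ∀ i j, 0 < (P ^ N) i j) {d : n → ℝ} (hd : ∑ i, d i = 0) :
    Tendsto (fun t => ∑ j, |(d ᵥ* (P ^ t)) j|) atTop (𝓝 0) := by
  obtain ⟨δ, hδ, hδle⟩ := exists_pos_le_of_forall_pos hpos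
  have hstep : ∀ t s ε, (∀ i j, ε ≤ (P ^ s) i j) →
      ∑ j, |(d ᵥ* (P ^ (t + s))) j| ≤ (1 - Fintype.card n * ε) * ∑ j, |(d ᵥ* (P ^ t)) j| := by
    intro t s ε hε
    rw [pow_add, ← vecMul_vecMul]
    refine sum_abs_vecMul_le_of_le hε (sum_row_of_mem_rowStochastic (pow_mem hP s)) ?_
    rw [sum_vecMul_of_mem_rowStochastic (pow_mem hP t), hd]
  have hcard : Fintype.card n * δ ≤ 1 := by
    obtain ⟨i⟩ := ‹Nonempty n›
    calc Fintype.card n * δ = ∑ _j : n, δ := by rw [sum_const, card_univ, nsmul_eq_mul]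
      _ ≤ ∑ j, (P ^ N) i j := sum_le_sum fun j _ => hδle i j
      _ = 1 := sum_row_of_mem_rowStochastic (pow_mem hP N) i
  refine tendsto_zero_of_antitone_of_le_mul (fun t => sum_nonneg fun _ _ => abs_nonneg _)
    (antitone_nat_of_succ_le fun t => ?_) hN (sub_nonneg.2 hcard) ?_
    fun t => hstep t N δ hδle
  · simpa using hstep t 1 0 fun i j => by simpa using nonneg_of_mem_rowStochastic hP
  · exact sub_lt_self 1 (mul_pos (Nat.cast_pos.2 Fintype.card_pos) hδ)

theorem tendsto_vecMul_pow_of_pow_pos [Nonempty n] (hP : P ∈ rowStochastic ℝ n) {N : ℕ}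
    (hN : 0 < N) (hpos : ∀ i j, 0 < (P ^ N) i j) {π μ : n → ℝ} (hπ : π ᵥ* P = π)
    (hπ1 : ∑ i, π i = 1) (hμ1 : ∑ i, μ i = 1) :
    Tendsto (fun t => μ ᵥ* (P ^ t)) atTop (𝓝 π) := by
  have hL := tendsto_sum_abs_vecMul_pow hP hN hpos (d := μ - π)
    (by simp [sum_sub_distrib, hπ1, hμ1])
  rw [← tendsto_sub_nhds_zero_iff]
  refine squeeze_zero_norm (fun t => ?_) hL
  rw [sub_vecMul, vecMul_pow_eq_self hπ]
  refine (pi_norm_le_iff_of_nonneg (sum_nonneg fun _ _ => abs_nonneg _)).2 fun j => ?_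
  rw [Real.norm_eq_abs]
  exact single_le_sum (f := fun j => |(μ ᵥ* P ^ t - π) j|) (fun _ _ => abs_nonneg _) (mem_univ j)

end Doeblin

theorem mul_apply_pos_of_pos {R m n o : Type*} [Semiring R] [PartialOrder R]
    [IsStrictOrderedRing R] [Fintype n] {A : Matrix m n R} {B : Matrix n o R}
    (hA : ∀ i j, 0 ≤ A i j) (hB : ∀ j k, 0 ≤ B j k) {i : m} {j : n} {k : o}
    (hAij : 0 < A i j) (hBjk : 0 < B j k) : 0 < (A * B) i k :=
  sum_pos' (fun l _ => mul_nonneg (hA i l) (hB l k)) ⟨j, mem_univ j, mul_pos hAij hBjk⟩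

section NetworkGame

variable {E : Type*} [DecidableEq E]

theorem flipL_apply_self (e : E) (g : E → Bool) : flipL e g e = !g e := by
  simp [flipL]

theorem flipL_apply_of_ne {e e' : E} (h : e' ≠ e) (g : E → Bool) : flipL e g e' = g e' := by
  simp [flipL, h]

theorem flipL_ne_self (e : E) (g : E → Bool) : flipL e g ≠ g := fun h => by
  simpa [flipL_apply_self] using congrFun h e

theorem flipL_left_injective (g : E → Bool) : Function.Injective fun e => flipL e g := by
  intro e e' h
  by_contra hne
  simpa [flipL_apply_self, flipL_apply_of_ne hne] using congrFun h e

theorem hammingDist_flipL_lt [Fintype E] {e : E} {g w : E → Bool} (h : g e ≠ w e) :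
    hammingDist (flipL e g) w < hammingDist g w := by
  refine card_lt_card ((ssubset_iff_of_subset fun i hi => ?_).2 ⟨e, ?_, ?_⟩)
  · by_cases hie : i = e
    · subst hie
      simp_all [flipL_apply_self]
    · simpa [flipL_apply_of_ne hie] using hi
  · simpa using h
  · simp_all [flipL_apply_self]

variable [Fintype E] {ρ : E → (E → Bool) → ℝ} {F : (E → Bool) → E → ℝ}

theorem netPi_apply (g w : E → Bool) :
    netPi ρ F g w = (if g = w then ∑ e, ρ e g * (1 - F g e) else 0) +
      ∑ e, if w = flipL e g then ρ e g * F g e else 0 := by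
  by_cases hgw : g = w
  · subst hgw
    simp [netPi, fun e => (flipL_ne_self e g).symm]
  · simp [netPi, hgw]

theorem netPi_apply_self (g : E → Bool) : netPi ρ F g g = ∑ e, ρ e g * (1 - F g e) := by
  simp [netPi]

theorem netPi_apply_flipL (e : E) (g : E → Bool) : netPi ρ F g (flipL e g) = ρ e g * F g e := by
  simp [netPi_apply, (flipL_ne_self e g).symm, (flipL_left_injective g).eq_iff]

theorem netPi_mem_rowStochastic (hρ : IsMeeting ρ) (hF : IsAcceptance F) :
    netPi ρ F ∈ rowStochastic ℝ (E → Bool) := by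
  refine mem_rowStochastic_iff_sum.2 ⟨fun g w => ?_, fun g => ?_⟩
  · rw [netPi_apply]
    refine add_nonneg ?_ (sum_nonneg fun e _ => ?_)
    · split_ifs
      exacts [sum_nonneg fun e _ => mul_nonneg (hρ.1 e g).le (sub_nonneg.2 (hF.1 g e).2.le), le_rfl]
    · split_ifs
      exacts [mul_nonneg (hρ.1 e g).le (hF.1 g e).1.le, le_rfl]
  · simp only [netPi_apply, sum_add_distrib, sum_ite_eq, mem_univ, if_true]
    rw [sum_comm]
    simp only [sum_ite_eq', mem_univ, if_true, ← sum_add_distrib]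
    simpa [mul_sub] using hρ.2 g

theorem netPi_apply_self_pos [Nonempty E] (hρ : IsMeeting ρ) (hF : IsAcceptance F)
    (g : E → Bool) : 0 < netPi ρ F g g := by
  rw [netPi_apply_self]
  exact sum_pos (fun e _ => mul_pos (hρ.1 e g) (sub_pos.2 (hF.1 g e).2)) univ_nonempty

theorem netPi_apply_flipL_pos (hρ : IsMeeting ρ) (hF : IsAcceptance F) (e : E)
    (g : E → Bool) : 0 < netPi ρ F g (flipL e g) := by
  rw [netPi_apply_flipL]
  exact mul_pos (hρ.1 e g) (hF.1 g e).1

theorem netPi_pow_apply_pos_of_hammingDist_le [Nonempty E] (hρ : IsMeeting ρ)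
    (hF : IsAcceptance F) {t : ℕ} {g w : E → Bool} (h : hammingDist g w ≤ t) :
    0 < (netPi ρ F ^ t) g w := by
  have hP := netPi_mem_rowStochastic hρ hF
  induction t generalizing g with
  | zero => simp [hammingDist_eq_zero.1 (Nat.le_zero.1 h)]
  | succ t ih =>
    have hmul {x : E → Bool} (hgx : 0 < netPi ρ F g x) (hxw : 0 < (netPi ρ F ^ t) x w) :
        0 < (netPi ρ F ^ (t + 1)) g w := by
      rw [pow_succ']
      exact mul_apply_pos_of_pos (fun _ _ => nonneg_of_mem_rowStochastic hP)
        (fun _ _ => nonneg_of_mem_rowStochastic (pow_mem hP t)) hgx hxw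
    by_cases hgw : g = w
    · subst hgw
      exact hmul (netPi_apply_self_pos hρ hF g) (ih (by simp))
    · obtain ⟨e, he⟩ := Function.ne_iff.1 hgw
      exact hmul (netPi_apply_flipL_pos hρ hF e g) (ih (by have := hammingDist_flipL_lt he; omega))

end NetworkGame

theorem tendsto_stationary_general {E : Type*} [DecidableEq E] [Fintype E] [Nonempty E]
    (ρ : E → (E → Bool) → ℝ) (F : (E → Bool) → E → ℝ)
    (hρ : IsMeeting ρ) (hF : IsAcceptance F)
    (π : (E → Bool) → ℝ) (hπsum : ∑ g, π g = 1)
    (hπstat : ∀ w, ∑ g, π g * netPi ρ F g w = π w)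
    (π₀ : (E → Bool) → ℝ) (hπ₀sum : ∑ g, π₀ g = 1) :
    ∀ w : E → Bool,
      Tendsto (fun t : ℕ => ∑ g, π₀ g * (netPi ρ F ^ t) g w) atTop (nhds (π w)) := by
  have hpos : ∀ g w : E → Bool, 0 < (netPi ρ F ^ Fintype.card E) g w := fun _ _ =>
    netPi_pow_apply_pos_of_hammingDist_le hρ hF hammingDist_le_card_fintype
  exact tendsto_pi_nhds.1 <| tendsto_vecMul_pow_of_pow_pos (netPi_mem_rowStochastic hρ hF)
    (Fintype.card_pos (α := E)) hpos (funext hπstat) hπsum hπ₀sum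

/-- The stationary distribution is the long-run distribution of the chain from any
starting distribution. -/
theorem tendsto_stationary {E : Type*} [DecidableEq E] [Fintype E] [Nonempty E]
    (ρ : E → (E → Bool) → ℝ) (F : (E → Bool) → E → ℝ)
    (hρ : IsMeeting ρ) (hF : IsAcceptance F)
    (π : (E → Bool) → ℝ) (hπnonneg : ∀ g, 0 ≤ π g) (hπsum : ∑ g, π g = 1)
    (hπstat : ∀ w, ∑ g, π g * netPi ρ F g w = π w)
    (π₀ : (E → Bool) → ℝ) (hπ₀nonneg : ∀ g, 0 ≤ π₀ g) (hπ₀sum : ∑ g, π₀ g = 1) :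
    ∀ w : E → Bool,
      Tendsto (fun t : ℕ => ∑ g, π₀ g * (netPi ρ F ^ t) g w) atTop (nhds (π w)) :=
  tendsto_stationary_general ρ F hρ hF π hπsum hπstat π₀ hπ₀sum
end

section
/- Stationary distribution under a potential function (the result of Mele (2017) used in Section 3.3): let Π = Π(ρ, F) be the transition matrix of the network formation game on S = (E → Bool). Suppose (i) the meeting probabilities satisfy ρ e g = ρ e (flip e g) for all e ∈ E, g ∈ S, and (ii) the acceptance probabilities are logistic with potential Q : S → ℝ, i.e. F g e = exp(Q (flip e g)) / (exp(Q g) + exp(Q (flip e g))) for all g, e. Define π g = exp(Q g) / ∑_{w ∈ S} exp(Q w). Then π satisfies detailed balance, π g * Π g w = π w * Π w g for all g, w ∈ S, and consequently π is a stationary distribution: ∑_{g ∈ S} π g * Π g w = π w for every w ∈ S; i.e. the stationary distribution of the chain is proportional to exp(Q(g)). -/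
open Matrix Finset Filter

lemma flipL_flipL {E : Type*} [DecidableEq E] (e : E) (g : E → Bool) :
    flipL e (flipL e g) = g := by
  funext x
  by_cases h : x = e <;> simp [flipL, Function.update, h]

lemma flipL_ne {E : Type*} [DecidableEq E] (e : E) (g : E → Bool) :
    flipL e g ≠ g := by
  intro h
  have := congrFun h e
  simp [flipL] at this

lemma eq_flipL_iff {E : Type*} [DecidableEq E] (e : E) (g w : E → Bool) :
    w = flipL e g ↔ g = flipL e w := by
  constructor <;> rintro rfl <;> rw [flipL_flipL]

/-- Stationary distribution under a potential function (Mele (2017), used in Section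
3.3): if meeting probabilities do not depend on the link being updated, and acceptance
probabilities are logistic with potential `Q`, then `π g ∝ exp (Q g)` satisfies
detailed balance and is a stationary distribution. -/
theorem potential_stationary {E : Type*} [DecidableEq E] [Fintype E] [Nonempty E]
    (ρ : E → (E → Bool) → ℝ) (F : (E → Bool) → E → ℝ) (Q : (E → Bool) → ℝ)
    (hρ : IsMeeting ρ)
    (hmele : ∀ (e : E) (g : E → Bool), ρ e g = ρ e (flipL e g))
    (hlogit : ∀ (g : E → Bool) (e : E),
      F g e = Real.exp (Q (flipL e g)) / (Real.exp (Q g) + Real.exp (Q (flipL e g))))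
    (π : (E → Bool) → ℝ)
    (hπ : ∀ g, π g = Real.exp (Q g) / ∑ w, Real.exp (Q w)) :
    (∀ g w : E → Bool, π g * netPi ρ F g w = π w * netPi ρ F w g) ∧
    (∀ w : E → Bool, ∑ g, π g * netPi ρ F g w = π w) := by

  have hZ : (0:ℝ) < ∑ w : E → Bool, Real.exp (Q w) :=
    Finset.sum_pos (fun w _ => Real.exp_pos _) ⟨_, Finset.mem_univ (fun _ => false)⟩
  have hdb : ∀ g w : E → Bool, π g * netPi ρ F g w = π w * netPi ρ F w g := by
    intro g w
    by_cases h : g = w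
    · subst h; rfl
    · have h' : w ≠ g := fun hh => h hh.symm
      simp only [netPi, Matrix.of_apply, if_neg h, if_neg h']
      rw [Finset.mul_sum, Finset.mul_sum]
      refine Finset.sum_congr rfl fun e _ => ?_
      by_cases he : w = flipL e g
      · have he' : g = flipL e w := (eq_flipL_iff e g w).1 he
        rw [if_pos he, if_pos he']
        have hρeq : ρ e g = ρ e w := by rw [hmele e g, ← he]
        have hFg : F g e = Real.exp (Q w) / (Real.exp (Q g) + Real.exp (Q w)) := by
          rw [hlogit g e, ← he]
        have hFw : F w e = Real.exp (Q g) / (Real.exp (Q w) + Real.exp (Q g)) := by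
          rw [hlogit w e, ← he']
        have hpos : (0:ℝ) < Real.exp (Q g) + Real.exp (Q w) :=
          add_pos (Real.exp_pos _) (Real.exp_pos _)
        rw [hπ g, hπ w, hFg, hFw, hρeq]
        rw [add_comm (Real.exp (Q w))]
        ring
      · have he' : g ≠ flipL e w := fun hh => he ((eq_flipL_iff e w g).1 hh)
        rw [if_neg he, if_neg he']
        ring
  refine ⟨hdb, fun w => ?_⟩
  have hrow : ∑ g, netPi ρ F w g = 1 := by
    rw [← Finset.add_sum_erase _ _ (Finset.mem_univ w)]
    have h1 : netPi ρ F w w = ∑ e, ρ e w * (1 - F w e) := by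
      simp [netPi]
    have h2 : ∑ g ∈ Finset.univ.erase w, netPi ρ F w g = ∑ e, ρ e w * F w e := by
      rw [Finset.sum_congr rfl (fun g hg => ?_), Finset.sum_comm]
      · refine Finset.sum_congr rfl fun e _ => ?_
        rw [Finset.sum_ite_eq' (Finset.univ.erase w) (flipL e w) (fun _ => ρ e w * F w e)]
        rw [if_pos (Finset.mem_erase.2 ⟨flipL_ne e w, Finset.mem_univ _⟩)]
      · have hg' : w ≠ g := (Finset.mem_erase.1 hg).1.symm
        simp [netPi, if_neg hg']
    rw [h1, h2, ← Finset.sum_add_distrib]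
    simp only [mul_sub, mul_one]
    simp only [sub_add_cancel]
    exact hρ.2 w
  calc ∑ g, π g * netPi ρ F g w = ∑ g, π w * netPi ρ F w g :=
        Finset.sum_congr rfl fun g _ => hdb g w
    _ = π w * ∑ g, netPi ρ F w g := by rw [Finset.mul_sum]
    _ = π w := by rw [hrow, mul_one]
end
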